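/- Let t, v, M, E_sym be natural numbers with n = t·v, 1 ≤ M ≤ t and 1 ≤ E_sym ≤ v. Let C be a k-dimensional linear subspace of (ZMod 2)^n (with coordinates indexed by pairs (subblock index in Fin t, position in Fin v)). Let E be the set of vectors e ∈ (ZMod 2)^n such that at most M of the t subblocks of e are nonzero and the restriction of e to each subblock has Hamming weight at most E_sym. If distinct elements of E lie in distinct cosets of C (i.e., for all e₁ ≠ e₂ in E, e₁ − e₂ ∉ C), then 2^{n−k} ≥ Σ_{j=1}^{M} C(t, j) · [ Σ_{l=1}^{E_sym} C(v, l) ]^j + 1. -/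

import Mathlib

/-- The Hamming weight of a binary word: the number of positions where it equals 1. -/
def wt {α : Type*} [Fintype α] (f : α → ZMod 2) : ℕ :=
  (Finset.univ.filter fun i => f i = 1).card

/-- Error patterns with at most `M` nonzero subblocks, each subblock of
Hamming weight at most `Esym`. -/
def MPBCSymErrors (t v M Esym : ℕ) : Set (Fin t × Fin v → ZMod 2) :=
  {e | Nat.card {i : Fin t // (fun p => e (i, p)) ≠ 0} ≤ M ∧
       ∀ i : Fin t, wt (fun p => e (i, p)) ≤ Esym}

/-!
Distinct correctable patterns lie in distinct cosets of `C`, so there are at most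
`|V ⧸ C| = 2 ^ (n - k)` of them. A pattern is determined by its set of `j ≤ M` nonzero
subblocks together with a nonzero word of weight at most `Esym` in each of them, which gives
`C(t, j) · W ^ j` patterns with `W = Σ_{l=1}^{Esym} C(v, l)`; the term `j = 0` is the zero
pattern, the `+ 1` of the bound.
-/

open Finset

lemma zmod_two_eq_zero_or_eq_one (x : ZMod 2) : x = 0 ∨ x = 1 := by
  revert x; decide

section Weight

variable {α : Type*} [Fintype α]

lemma wt_eq_zero_iff {f : α → ZMod 2} : wt f = 0 ↔ f = 0 := by
  simp only [wt, card_eq_zero, filter_eq_empty_iff, mem_univ, true_implies, funext_iff,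
    Pi.zero_apply]
  exact forall_congr' fun i => by rcases zmod_two_eq_zero_or_eq_one (f i) with h | h <;> simp [h]

variable [DecidableEq α]

lemma card_filter_wt_eq (l : ℕ) :
    #{f : α → ZMod 2 | wt f = l} = (Fintype.card α).choose l := by
  rw [← card_univ, ← card_powersetCard]
  refine card_nbij' (fun f => ({i | f i = 1} : Finset α)) (fun s i => if i ∈ s then 1 else 0)
    ?_ ?_ ?_ ?_
  · intro f hf
    rw [mem_coe, mem_filter] at hf
    rw [mem_coe, mem_powersetCard_univ]
    exact hf.2
  · intro s hs
    simp only [mem_coe, mem_powersetCard_univ] at hs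
    simp [wt, ← hs]
  · intro f _
    funext i
    rcases zmod_two_eq_zero_or_eq_one (f i) with h | h <;> simp [h]
  · intro s _
    ext i
    by_cases h : i ∈ s <;> simp [h]

lemma card_filter_wt_mem (I : Finset ℕ) :
    #{f : α → ZMod 2 | wt f ∈ I} = ∑ l ∈ I, (Fintype.card α).choose l := by
  rw [card_eq_sum_card_fiberwise (s := {f : α → ZMod 2 | wt f ∈ I}) (t := I) (f := wt)
    (fun f hf => by simpa using hf)]
  refine sum_congr rfl fun l hl => ?_
  rw [← card_filter_wt_eq, filter_filter]
  exact congrArg card (filter_congr fun f _ => and_iff_right_of_imp fun h => h ▸ hl)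

end Weight

section Support

variable {ι B : Type*} [Fintype ι] [DecidableEq ι] [Zero B] [DecidableEq B] {S : Finset B}

/-- With `0 ∈ S`, the words supported exactly on `T` form the box with sides `S \ {0}` on `T`
and `{0}` off `T`. -/
lemma card_filter_piFinset_support_eq (hS : 0 ∈ S) (T : Finset ι) :
    #{g ∈ Fintype.piFinset fun _ : ι => S | ({i | g i ≠ 0} : Finset ι) = T}
      = #(S.erase 0) ^ #T := by
  have hbox : {g ∈ Fintype.piFinset fun _ : ι => S | ({i | g i ≠ 0} : Finset ι) = T}
      = Fintype.piFinset fun i => if i ∈ T then S.erase 0 else {0} := by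
    ext g
    simp only [mem_filter, Fintype.mem_piFinset, Finset.ext_iff, mem_univ, true_and,
      ← forall_and]
    refine forall_congr' fun i => ?_
    by_cases hg : g i = 0 <;> by_cases hi : i ∈ T <;> simp [hg, hi, hS]
  rw [hbox, Fintype.card_piFinset]
  simp_rw [apply_ite card, card_singleton]
  rw [prod_ite_mem, univ_inter, prod_const]

lemma card_filter_piFinset_card_support_eq (hS : 0 ∈ S) (j : ℕ) :
    #{g ∈ Fintype.piFinset fun _ : ι => S | #({i | g i ≠ 0} : Finset ι) = j}
      = (Fintype.card ι).choose j * #(S.erase 0) ^ j := by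
  refine (card_eq_sum_card_fiberwise (f := fun g : ι → B => ({i | g i ≠ 0} : Finset ι))
    (t := powersetCard j univ) fun g hg => mem_powersetCard_univ.2 (mem_filter.1 hg).2).trans ?_
  rw [sum_congr rfl fun T hT => ?_, sum_const, card_powersetCard, card_univ, smul_eq_mul]
  rw [mem_powersetCard_univ] at hT
  rw [filter_filter, ← hT, ← card_filter_piFinset_support_eq hS]
  exact congrArg card (filter_congr fun g _ => and_iff_right_of_imp (congrArg card))

lemma card_filter_piFinset_card_support_le (hS : 0 ∈ S) (M : ℕ) :
    #{g ∈ Fintype.piFinset fun _ : ι => S | #({i | g i ≠ 0} : Finset ι) ≤ M}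
      = ∑ j ∈ Icc 0 M, (Fintype.card ι).choose j * #(S.erase 0) ^ j := by
  refine (card_eq_sum_card_fiberwise (f := fun g : ι → B => #({i | g i ≠ 0} : Finset ι))
    (t := Icc 0 M) fun g hg => mem_Icc.2 ⟨Nat.zero_le _, (mem_filter.1 hg).2⟩).trans ?_
  refine sum_congr rfl fun j hj => ?_
  rw [filter_filter, ← card_filter_piFinset_card_support_eq hS]
  exact congrArg card
    (filter_congr fun g _ => and_iff_right_of_imp fun h => h.trans_le (mem_Icc.1 hj).2)

end Support

lemma Submodule.ncard_le_card_pow_finrank_sub {K V : Type*} [Field K] [Finite K] [AddCommGroup V]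
    [Module K V] [FiniteDimensional K V] (C : Submodule K V) {E : Set V}
    (hE : E.Pairwise fun e₁ e₂ => e₁ - e₂ ∉ C) :
    E.ncard ≤ Nat.card K ^ (Module.finrank K V - Module.finrank K C) := by
  have : Finite (V ⧸ C) := Module.finite_of_finite K
  calc E.ncard ≤ (Set.univ : Set (V ⧸ C)).ncard :=
        Set.ncard_le_ncard_of_injOn C.mkQ (fun _ _ => Set.mem_univ _) fun e₁ h₁ e₂ h₂ h =>
          not_not.1 fun hne => hE h₁ h₂ hne ((Submodule.Quotient.eq C).1 h)
    _ = Nat.card K ^ (Module.finrank K V - Module.finrank K C) := by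
        rw [Set.ncard_univ, Module.natCard_eq_pow_finrank (K := K), C.finrank_quotient]

lemma MPBCSymErrors_eq_preimage_curry (t v M Esym : ℕ) :
    MPBCSymErrors t v M Esym = Function.curry ⁻¹'
      ↑{g ∈ Fintype.piFinset fun _ : Fin t => ({w | wt w ≤ Esym} : Finset (Fin v → ZMod 2)) |
        #({i | g i ≠ 0} : Finset (Fin t)) ≤ M} := by
  ext e
  simp only [MPBCSymErrors, ne_eq, Nat.card_eq_fintype_card, Fintype.card_subtype, and_comm,
    Set.mem_ofPred_eq, coe_filter, Fintype.mem_piFinset, mem_filter, mem_univ, true_and,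
    Set.preimage_ofPred_eq]
  exact Iff.rfl

lemma ncard_MPBCSymErrors (t v M Esym : ℕ) :
    (MPBCSymErrors t v M Esym).ncard
      = ∑ j ∈ Icc 0 M, t.choose j * (∑ l ∈ Icc 1 Esym, v.choose l) ^ j := by
  have hzero : (0 : Fin v → ZMod 2) ∈ ({w | wt w ≤ Esym} : Finset _) := by
    simp [wt_eq_zero_iff.2]
  have herase : ({w | wt w ≤ Esym} : Finset (Fin v → ZMod 2)).erase 0
      = ({w | wt w ∈ Icc 1 Esym} : Finset (Fin v → ZMod 2)) := by
    ext w
    simp only [mem_erase, mem_filter, mem_univ, true_and, mem_Icc, ← wt_eq_zero_iff.not]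
    omega
  rw [MPBCSymErrors_eq_preimage_curry,
    Set.ncard_preimage_of_injective_subset_range Function.curry_injective
      fun g _ => ⟨Function.uncurry g, Function.curry_uncurry g⟩,
    Set.ncard_coe_finset, card_filter_piFinset_card_support_le hzero, herase, card_filter_wt_mem,
    Fintype.card_fin, Fintype.card_fin]

theorem stmt5_general (t v M Esym k : ℕ)
    (C : Submodule (ZMod 2) (Fin t × Fin v → ZMod 2))
    (hk : Module.finrank (ZMod 2) C = k)
    (hcorr : ∀ e₁ ∈ MPBCSymErrors t v M Esym, ∀ e₂ ∈ MPBCSymErrors t v M Esym,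
      e₁ ≠ e₂ → e₁ - e₂ ∉ C) :
    (∑ j ∈ Finset.Icc 1 M, t.choose j * (∑ l ∈ Finset.Icc 1 Esym, v.choose l) ^ j) + 1
      ≤ 2 ^ (t * v - k) := by
  have hdim : Module.finrank (ZMod 2) (Fin t × Fin v → ZMod 2) = t * v := by simp
  have hbound := C.ncard_le_card_pow_finrank_sub hcorr
  rwa [ncard_MPBCSymErrors, Icc_eq_cons_Ioc (Nat.zero_le M), sum_cons, ← Icc_add_one_left_eq_Ioc,
    Nat.choose_zero_right, pow_zero, mul_one, add_comm, Nat.card_zmod, hdim, hk] at hbound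

/-- The MPBC bound without a gap constraint: if the `k`-dimensional code
`C ≤ (ZMod 2)^(t·v)` corrects all error patterns with at most `M` nonzero subblocks
each of Hamming weight at most `Esym`, then
`2^(n-k) ≥ Σ_{j=1}^{M} C(t,j) · (Σ_{l=1}^{Esym} C(v,l))^j + 1`. -/
theorem stmt5 (t v M Esym k : ℕ) (hM1 : 1 ≤ M) (hMt : M ≤ t)
    (hE1 : 1 ≤ Esym) (hEv : Esym ≤ v)
    (C : Submodule (ZMod 2) (Fin t × Fin v → ZMod 2))
    (hk : Module.finrank (ZMod 2) C = k)
    (hcorr : ∀ e₁ ∈ MPBCSymErrors t v M Esym, ∀ e₂ ∈ MPBCSymErrors t v M Esym,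
      e₁ ≠ e₂ → e₁ - e₂ ∉ C) :
    (∑ j ∈ Finset.Icc 1 M, t.choose j * (∑ l ∈ Finset.Icc 1 Esym, v.choose l) ^ j) + 1
      ≤ 2 ^ (t * v - k) :=
  stmt5_general t v M Esym k C hk hcorr
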